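/- Let A ∈ GLₙ(ℤ) be such that the homoclinicity group Δ(f_A) of the induced toral automorphism f_A is trivial (Δ(f_A) = {0}). Then every map τ : Tⁿ → Tⁿ is automatically pre-injective with respect to f_A; in particular, the constant map 0 is pre-injective but not surjective (for n ≥ 1), so (Tⁿ, f_A) does not have the Myhill property. -/

import Mathlib

open Filter Topology

def homoclinic {X : Type*} [MetricSpace X] (f : X ≃ₜ X) (x y : X) : Prop :=
  Filter.Tendsto (fun k : ℤ => dist ((f.toEquiv ^ k) x) ((f.toEquiv ^ k) y))
    Filter.cofinite (nhds 0)

abbrev Torus (n : ℕ) : Type := Fin n → AddCircle (1 : ℝ)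

noncomputable def torusProj (n : ℕ) (x : Fin n → ℝ) : Torus n :=
  fun i => (x i : AddCircle (1 : ℝ))

/-!
A toral automorphism lifts a linear map of ℝⁿ, so it is additive, and since the metric on Tⁿ is
translation invariant, `p` and `q` are homoclinic exactly when `p - q` is homoclinic to `0`.
Hence `Δ(f_A) = {0}` forces homoclinic points to coincide, and every map is pre-injective; the
constant map `0` is not surjective because Tⁿ is nontrivial for `n ≥ 1`.
-/

theorem torusProj_surjective (n : ℕ) : Function.Surjective (torusProj n) := fun a =>
  ⟨fun i => (QuotientAddGroup.mk_surjective (a i)).choose,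
    funext fun i => (QuotientAddGroup.mk_surjective (a i)).choose_spec⟩

theorem torusProj_add (n : ℕ) (x y : Fin n → ℝ) :
    torusProj n (x + y) = torusProj n x + torusProj n y :=
  rfl

theorem map_add_of_torusProj_mulVec {n : ℕ} (B : Matrix (Fin n) (Fin n) ℝ)
    (f : Torus n → Torus n) (hf : ∀ x, f (torusProj n x) = torusProj n (B.mulVec x))
    (a b : Torus n) : f (a + b) = f a + f b := by
  obtain ⟨x, rfl⟩ := torusProj_surjective n a
  obtain ⟨y, rfl⟩ := torusProj_surjective n b
  rw [← torusProj_add, hf, hf, hf, Matrix.mulVec_add, torusProj_add]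

instance AddCircle.nontrivial {p : ℝ} [hp : Fact (0 < p)] : Nontrivial (AddCircle p) :=
  ⟨⟨((p / 2 : ℝ) : AddCircle p), 0, by
    rw [Ne, AddCircle.coe_eq_zero_iff_of_mem_Ico ⟨by linarith [hp.out], by linarith [hp.out]⟩]
    exact (half_pos hp.out).ne'⟩⟩

theorem Torus.nontrivial {n : ℕ} (hn : 0 < n) : Nontrivial (Torus n) :=
  have : Nonempty (Fin n) := ⟨⟨0, hn⟩⟩
  inferInstance

theorem AddAut.toEquiv_zsmul {X : Type*} [Add X] (φ : AddAut X) (k : ℤ) :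
    (k • φ).toEquiv = φ.toEquiv ^ k :=
  congrArg Additive.toMul (map_zsmul (AddAut.toPerm X) k φ)

theorem homoclinic_iff_homoclinic_sub_zero {X : Type*} [NormedAddCommGroup X] (f : X ≃ₜ X)
    (hf : ∀ a b, f (a + b) = f a + f b) (p q : X) :
    homoclinic f p q ↔ homoclinic f (p - q) 0 := by
  let φ : AddAut X := ⟨f.toEquiv, hf⟩
  refine tendsto_congr fun k => ?_
  rw [← φ.toEquiv_zsmul k, dist_eq_norm, dist_eq_norm]
  change ‖(k • φ) p - (k • φ) q‖ = ‖(k • φ) (p - q) - (k • φ) 0‖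
  rw [map_sub, map_zero, sub_zero]

theorem eq_of_homoclinic {X : Type*} [NormedAddCommGroup X] (f : X ≃ₜ X)
    (hf : ∀ a b, f (a + b) = f a + f b) (hΔ : ∀ p, homoclinic f p 0 → p = 0) {p q : X}
    (h : homoclinic f p q) : p = q :=
  sub_eq_zero.mp (hΔ _ ((homoclinic_iff_homoclinic_sub_zero f hf p q).mp h))

theorem Function.const_not_surjective {α β : Type*} [Nontrivial β] (b : β) :
    ¬ Function.Surjective (fun _ : α => b) := fun h => by
  obtain ⟨c, hc⟩ := exists_ne b
  obtain ⟨a, ha⟩ := h c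
  exact hc ha.symm

theorem stmt18_general {n : ℕ} (A : Matrix (Fin n) (Fin n) ℤ)
    (f : Torus n ≃ₜ Torus n)
    (hf : ∀ x : Fin n → ℝ,
      f (torusProj n x) = torusProj n ((A.map (Int.cast : ℤ → ℝ)).mulVec x))
    (hΔ : ∀ p : Torus n, homoclinic f p 0 → p = 0) :
    (∀ τ : Torus n → Torus n, ∀ p q : Torus n, homoclinic f p q → τ p = τ q → p = q) ∧
    (0 < n → ¬ Function.Surjective (fun _ : Torus n => (0 : Torus n))) := by
  have hadd : ∀ a b, f (a + b) = f a + f b := map_add_of_torusProj_mulVec _ f hf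
  refine ⟨fun _ p q h _ => eq_of_homoclinic f hadd hΔ h, fun hn => ?_⟩
  have := Torus.nontrivial hn
  exact Function.const_not_surjective 0

theorem stmt18 {n : ℕ} (A : Matrix (Fin n) (Fin n) ℤ) (hA : IsUnit A.det)
    (f : Torus n ≃ₜ Torus n)
    (hf : ∀ x : Fin n → ℝ,
      f (torusProj n x) = torusProj n ((A.map (Int.cast : ℤ → ℝ)).mulVec x))
    (hΔ : ∀ p : Torus n, homoclinic f p 0 → p = 0) :
    (∀ τ : Torus n → Torus n, ∀ p q : Torus n, homoclinic f p q → τ p = τ q → p = q) ∧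
    (0 < n → ¬ Function.Surjective (fun _ : Torus n => (0 : Torus n))) :=
  stmt18_general A f hf hΔ
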